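/- Let p be a prime, M₁, M₂ intervals of consecutive residues mod p with |M₁|, |M₂| ≤ √p, and n ≢ 0 mod p. Using the Dirichlet kernel bound and the trivial estimate, ∑_{s≠0,−n} |sin(π|M₁|s/p)/sin(πs/p)| · |sin(π|M₂|(s+n)/p)/sin(π(s+n)/p)| ≤ p·√(|M₁|·|M₂|) ≤ p^{3/2}, where the sum is over nonzero residues s mod p with s ≠ −n. -/

import Mathlib

/-!
For `s ≠ 0` the geometric-series formula identifies the sine ratio with the modulus of the
Dirichlet kernel `D_L(s) = ∑_{m < L} e(ms/p)`. Orthogonality of additive characters gives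
Parseval's identity `∑_s |∑_{j ∈ I} e(js/p)|² = p · #I`, so `∑_s |D_L(s)|² = pL` for `L ≤ p`.
Cauchy–Schwarz against the shifted kernel `s ↦ D_{L₂}(s + n)` then bounds the sum by
`√(pL₁) · √(pL₂)`, and `L₁L₂ ≤ p` gives the second inequality.
-/

open Finset

namespace ZMod

variable {N : ℕ} [NeZero N]

theorem sum_norm_sq_sum_stdAddChar (I : Finset (ZMod N)) :
    ∑ s, ‖∑ j ∈ I, stdAddChar (j * s)‖ ^ 2 = N * #I := by
  classical
  have hexpand (s : ZMod N) : (‖∑ j ∈ I, stdAddChar (j * s)‖ : ℂ) ^ 2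
      = ∑ j ∈ I, ∑ k ∈ I, stdAddChar (s * (j - k)) := by
    rw [← Complex.mul_conj', map_sum, sum_mul_sum]
    refine sum_congr rfl fun j _ => sum_congr rfl fun k _ => ?_
    rw [← AddChar.map_neg_eq_conj, ← AddChar.map_add_eq_mul]
    ring_nf
  apply Complex.ofReal_injective
  push_cast
  simp_rw [hexpand]
  rw [sum_comm]
  simp_rw [sum_comm (s := univ), AddChar.sum_mulShift _ (isPrimitive_stdAddChar N), sub_eq_zero,
    ZMod.card]
  simp [sum_ite_eq, mul_comm]

noncomputable def dirichletKernel (L : ℕ) (s : ZMod N) : ℂ :=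
  ∑ m ∈ range L, stdAddChar ((m : ZMod N) * s)

omit [NeZero N] in
theorem injOn_natCast_range : Set.InjOn (Nat.cast : ℕ → ZMod N) (range N) := fun a ha b hb h => by
  rw [natCast_eq_natCast_iff', Nat.mod_eq_of_lt (mem_range.mp ha),
    Nat.mod_eq_of_lt (mem_range.mp hb)] at h
  exact h

theorem sum_norm_sq_dirichletKernel {L : ℕ} (hL : L ≤ N) :
    ∑ s : ZMod N, ‖dirichletKernel L s‖ ^ 2 = (N * L : ℝ) := by
  have hinj : Set.InjOn (Nat.cast : ℕ → ZMod N) (range L) :=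
    injOn_natCast_range.mono (by simpa using hL)
  have := sum_norm_sq_sum_stdAddChar ((range L).image (Nat.cast : ℕ → ZMod N))
  rw [card_image_of_injOn hinj, card_range] at this
  simpa only [dirichletKernel, sum_image hinj] using this

open Complex Real in
theorem norm_dirichletKernel (L : ℕ) {s : ZMod N} (hs : s ≠ 0) :
    ‖dirichletKernel L s‖ = |Real.sin (π * L * s.val / N) / Real.sin (π * s.val / N)| := by
  have hψ : stdAddChar s ≠ 1 := by
    rwa [← AddChar.map_zero_eq_one (stdAddChar (N := N)), injective_stdAddChar.ne_iff]
  have hpow (k : ℕ) : stdAddChar s ^ k = exp (I * ↑(2 * π * k * s.val / N)) := by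
    rw [stdAddChar_apply, toCircle_apply, ← Complex.exp_nat_mul]
    push_cast
    ring_nf
  have hgeom : dirichletKernel L s = (stdAddChar s ^ L - 1) / (stdAddChar s ^ 1 - 1) := by
    simp only [dirichletKernel, ← nsmul_eq_mul, AddChar.map_nsmul_eq_pow, pow_one]
    exact geom_sum_eq hψ L
  rw [hgeom, norm_div, hpow, hpow, norm_exp_I_mul_ofReal_sub_one, norm_exp_I_mul_ofReal_sub_one,
    Real.norm_eq_abs, Real.norm_eq_abs, abs_mul, abs_mul, mul_div_mul_left _ _ (by norm_num),
    abs_div]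
  ring_nf

theorem sum_norm_dirichletKernel_mul_norm_dirichletKernel_add_le {L₁ L₂ : ℕ} (h₁ : L₁ ≤ N)
    (h₂ : L₂ ≤ N) (n : ZMod N) :
    ∑ s, ‖dirichletKernel L₁ s‖ * ‖dirichletKernel L₂ (s + n)‖ ≤ N * √(L₁ * L₂) := by
  have hshift : ∑ s, ‖dirichletKernel L₂ (s + n)‖ ^ 2 = ∑ s, ‖dirichletKernel L₂ s‖ ^ 2 :=
    Fintype.sum_equiv (Equiv.addRight n) _ _ fun _ ↦ rfl
  calc _ ≤ √(∑ s, ‖dirichletKernel L₁ s‖ ^ 2) * √(∑ s, ‖dirichletKernel L₂ (s + n)‖ ^ 2) :=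
        Real.sum_mul_le_sqrt_mul_sqrt _ _ _
    _ = √(N * L₁) * √(N * L₂) := by
        rw [hshift, sum_norm_sq_dirichletKernel h₁, sum_norm_sq_dirichletKernel h₂]
    _ = N * √(L₁ * L₂) := by
        rw [← Real.sqrt_mul (by positivity), mul_mul_mul_comm, Real.sqrt_mul (by positivity),
          Real.sqrt_mul_self (by positivity)]

end ZMod

theorem stmt19_general (p : ℕ) [Fact p.Prime] (L₁ L₂ : ℕ)
    (hL₁p : (L₁ : ℝ) ≤ Real.sqrt p) (hL₂p : (L₂ : ℝ) ≤ Real.sqrt p)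
    (n : ZMod p) :
    (∑ s ∈ Finset.univ.filter (fun s : ZMod p => s ≠ 0 ∧ s ≠ -n),
        |Real.sin (Real.pi * L₁ * s.val / p) / Real.sin (Real.pi * s.val / p)| *
          |Real.sin (Real.pi * L₂ * (s + n).val / p) / Real.sin (Real.pi * (s + n).val / p)|)
      ≤ (p : ℝ) * Real.sqrt ((L₁ : ℝ) * L₂) ∧
    (p : ℝ) * Real.sqrt ((L₁ : ℝ) * L₂) ≤ (p : ℝ) ^ ((3 : ℝ) / 2) := by
  have hsqrt : √(p : ℝ) ≤ p :=
    Real.sqrt_le_self_iff.mpr (.inr (mod_cast (Fact.out : p.Prime).one_lt.le))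
  have hLp {L : ℕ} (hL : (L : ℝ) ≤ √p) : L ≤ p := mod_cast hL.trans hsqrt
  constructor
  · calc _ = ∑ s ∈ univ.filter (fun s : ZMod p => s ≠ 0 ∧ s ≠ -n),
          ‖ZMod.dirichletKernel L₁ s‖ * ‖ZMod.dirichletKernel L₂ (s + n)‖ := by
          refine sum_congr rfl fun s hs ↦ ?_
          obtain ⟨hs0, hsn⟩ := (mem_filter.mp hs).2
          rw [ZMod.norm_dirichletKernel _ hs0,
            ZMod.norm_dirichletKernel _ fun h ↦ hsn (eq_neg_of_add_eq_zero_left h)]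
      _ ≤ ∑ s, ‖ZMod.dirichletKernel L₁ s‖ * ‖ZMod.dirichletKernel L₂ (s + n)‖ :=
          sum_le_sum_of_subset_of_nonneg (subset_univ _) fun _ _ _ ↦ by positivity
      _ ≤ _ :=
          ZMod.sum_norm_dirichletKernel_mul_norm_dirichletKernel_add_le (hLp hL₁p) (hLp hL₂p) n
  · have hLL : (L₁ : ℝ) * L₂ ≤ p :=
      (mul_le_mul hL₁p hL₂p (by positivity) (by positivity)).trans_eq
        (Real.mul_self_sqrt p.cast_nonneg)
    calc (p : ℝ) * √(L₁ * L₂) ≤ p * √p := by gcongr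
      _ = (p : ℝ) ^ ((3 : ℝ) / 2) := by
        rw [Real.sqrt_eq_rpow, ← Real.rpow_one_add' p.cast_nonneg (by norm_num)]
        norm_num

theorem stmt19 (p : ℕ) [Fact p.Prime] (L₁ L₂ : ℕ) (hL₁ : 1 ≤ L₁) (hL₂ : 1 ≤ L₂)
    (hL₁p : (L₁ : ℝ) ≤ Real.sqrt p) (hL₂p : (L₂ : ℝ) ≤ Real.sqrt p)
    (n : ZMod p) (hn : n ≠ 0) :
    (∑ s ∈ Finset.univ.filter (fun s : ZMod p => s ≠ 0 ∧ s ≠ -n),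
        |Real.sin (Real.pi * L₁ * s.val / p) / Real.sin (Real.pi * s.val / p)| *
          |Real.sin (Real.pi * L₂ * (s + n).val / p) / Real.sin (Real.pi * (s + n).val / p)|)
      ≤ (p : ℝ) * Real.sqrt ((L₁ : ℝ) * L₂) ∧
    (p : ℝ) * Real.sqrt ((L₁ : ℝ) * L₂) ≤ (p : ℝ) ^ ((3 : ℝ) / 2) :=
  stmt19_general p L₁ L₂ hL₁p hL₂p n
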